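/- arXiv:1512.08696 — 6 statements merged into one kernel-verified Lean document; each statement's English description precedes it below -/
import Mathlib

section
/- The harmonic product ∗ on the ring ℚ⟨x,y⟩, restricted to the subring 𝔥¹ = ℚ + ℚ⟨x,y⟩y (spanned by 1 and words z_{k₁}⋯z_{k_d} where z_k = x^{k-1}y), defined inductively by 1∗w = w∗1 = w and z_k w₁ ∗ z_l w₂ = z_k(w₁ ∗ z_l w₂) + z_l(z_k w₁ ∗ w₂) + z_{k+l}(w₁ ∗ w₂), is commutative. -/
/- The recursion defining the product of two words is symmetric under exchanging them: the first two
terms trade places and z_{k+l} = z_{l+k}. So the product of words is commutative by induction on the total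
length, and its bilinear extension is commutative because the double sum over the supports can be swapped. -/

noncomputable section

/-- 𝔥¹, the monoid algebra ℚ⟨z₁, z₂, …⟩ on the free monoid on ℕ+. -/
abbrev Hone : Type := MonoidAlgebra ℚ (FreeMonoid ℕ+)

/-- The harmonic product of two words, defined inductively. -/
def hword : List ℕ+ → List ℕ+ → Hone
  | [], L => MonoidAlgebra.single (FreeMonoid.ofList L) 1
  | K, [] => MonoidAlgebra.single (FreeMonoid.ofList K) 1
  | k :: K, l :: L =>
      MonoidAlgebra.single (FreeMonoid.of k) 1 * hword K (l :: L)
      + MonoidAlgebra.single (FreeMonoid.of l) 1 * hword (k :: K) L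
      + MonoidAlgebra.single (FreeMonoid.of (k + l)) 1 * hword K L
termination_by K L => K.length + L.length

/-- The harmonic product, extended ℚ-bilinearly to all of 𝔥¹. -/
def hstar (a b : Hone) : Hone :=
  a.coeff.sum fun w c => b.coeff.sum fun w' c' => (c * c') • hword (FreeMonoid.toList w) (FreeMonoid.toList w')

theorem hword_nil_right : ∀ K : List ℕ+, hword K [] = MonoidAlgebra.single (FreeMonoid.ofList K) 1
  | [] => hword.eq_1 []
  | k :: K => hword.eq_2 (k :: K) (List.cons_ne_nil k K)

theorem hword_comm (K L : List ℕ+) : hword K L = hword L K := by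
  fun_induction hword K L with
  | case1 L => rw [hword_nil_right]
  | case2 K _ => rw [hword.eq_1]
  | case3 k K l L ih₁ ih₂ ih₃ =>
    rw [hword.eq_3, ih₁, ih₂, ih₃, add_comm k l]
    abel

/-- The harmonic product is commutative. -/
theorem harmonic_comm (a b : Hone) : hstar a b = hstar b a := by
  rw [hstar, hstar, Finsupp.sum_comm]
  refine Finsupp.sum_congr fun w' _ => Finsupp.sum_congr fun w _ => ?_
  rw [hword_comm, mul_comm]

end
end

section
/- The harmonic product ∗ on 𝔥¹ = ℚ + ℚ⟨x,y⟩y is associative. -/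
/-! Both sides of the associativity law are ℚ-trilinear, so it suffices to compare them on words.
If one of the three words is empty it is the unit and there is nothing to prove. Otherwise, writing
the words as `z k * u`, `z l * v`, `z m * w`, unfolding the recursion twice turns either side into
`z k (…) + z l (…) + z m (…) + z (k+l) (…) + z (k+m) (…) + z (l+m) (…) + z (k+l+m) (…)`,
where the seven brackets are, term by term, the two bracketings of products of strictly shorter
words; induction on the total length finishes the proof. -/

noncomputable section

namespace Hone

open MonoidAlgebra

local infixl:67 " ∗ " => hstar

def word (K : List ℕ+) : Hone := single (FreeMonoid.ofList K) 1

def z (k : ℕ+) : Hone := single (FreeMonoid.of k) 1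

theorem word_nil : word [] = 1 := rfl

theorem word_cons (k : ℕ+) (K : List ℕ+) : word (k :: K) = z k * word K := by
  simp [word, z, single_mul_single]

theorem single_eq_smul_word (w : FreeMonoid ℕ+) (r : ℚ) : single w r = r • word w.toList := by
  simp [word, smul_single]

@[elab_as_elim]
theorem induction_on_word {motive : Hone → Prop} (a : Hone)
    (smul_word : ∀ (r : ℚ) (K : List ℕ+), motive (r • word K))
    (add : ∀ a b, motive a → motive b → motive (a + b)) : motive a :=
  induction_linear a (by simpa using smul_word 0 []) add
    fun w r => single_eq_smul_word w r ▸ smul_word r w.toList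

theorem hword_nil_left (L : List ℕ+) : hword [] L = word L := by
  rw [hword]; rfl

theorem hword_nil_right (K : List ℕ+) : hword K [] = word K := by
  cases K with
  | nil => rw [hword]; rfl
  | cons k K => rw [hword] <;> simp [word]

theorem hword_cons_cons (k l : ℕ+) (K L : List ℕ+) :
    hword (k :: K) (l :: L) = z k * hword K (l :: L) + z l * hword (k :: K) L
      + z (k + l) * hword K L := by
  rw [hword]; rfl

theorem hstar_add_left (a a' b : Hone) : (a + a') ∗ b = a ∗ b + a' ∗ b := by
  unfold hstar
  rw [coeff_add, Finsupp.sum_add_index'] <;> intros <;> simp [add_mul, add_smul, Finsupp.sum_add]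

theorem hstar_add_right (a b b' : Hone) : a ∗ (b + b') = a ∗ b + a ∗ b' := by
  unfold hstar
  rw [← Finsupp.sum_add]
  congr 1; ext w c
  rw [coeff_add, Finsupp.sum_add_index'] <;> intros <;> simp [mul_add, add_smul]

theorem hstar_smul_left (r : ℚ) (a b : Hone) : (r • a) ∗ b = r • (a ∗ b) := by
  unfold hstar
  rw [coeff_smul, Finsupp.sum_smul_index (fun w => by simp), Finsupp.smul_sum]
  refine Finsupp.sum_congr fun w _ => ?_
  rw [Finsupp.smul_sum]
  refine Finsupp.sum_congr fun w' _ => ?_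
  rw [smul_smul, mul_assoc]

theorem hstar_smul_right (r : ℚ) (a b : Hone) : a ∗ (r • b) = r • (a ∗ b) := by
  unfold hstar
  rw [Finsupp.smul_sum]
  refine Finsupp.sum_congr fun w _ => ?_
  rw [coeff_smul, Finsupp.sum_smul_index (fun w' => by simp), Finsupp.smul_sum]
  refine Finsupp.sum_congr fun w' _ => ?_
  rw [smul_smul, mul_left_comm]

theorem word_hstar_word (K L : List ℕ+) : word K ∗ word L = hword K L := by
  simp [word, hstar, Finsupp.sum_single_index]

theorem one_hstar (a : Hone) : 1 ∗ a = a := by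
  induction a using induction_on_word with
  | smul_word r L => rw [hstar_smul_right, ← word_nil, word_hstar_word, hword_nil_left]
  | add a a' ha ha' => rw [hstar_add_right, ha, ha']

theorem hstar_one (a : Hone) : a ∗ 1 = a := by
  induction a using induction_on_word with
  | smul_word r K => rw [hstar_smul_left, ← word_nil, word_hstar_word, hword_nil_right]
  | add a a' ha ha' => rw [hstar_add_left, ha, ha']

theorem z_mul_hstar_z_mul (k l : ℕ+) (a b : Hone) :
    z k * a ∗ z l * b = z k * (a ∗ z l * b) + z l * (z k * a ∗ b) + z (k + l) * (a ∗ b) := by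
  induction a using induction_on_word generalizing b with
  | add a a' ha ha' => simp only [mul_add, hstar_add_left, ha, ha']; abel
  | smul_word r K =>
  induction b using induction_on_word with
  | add b b' hb hb' => simp only [mul_add, hstar_add_right, hb, hb']; abel
  | smul_word s L =>
  simp only [mul_smul_comm, hstar_smul_left, hstar_smul_right, ← word_cons, word_hstar_word,
    hword_cons_cons, smul_add]

theorem z_mul_hstar_z_mul_hstar_z_mul_left (k l m : ℕ+) (a b c : Hone) :
    z k * a ∗ z l * b ∗ z m * c
      = z k * (a ∗ z l * b ∗ z m * c) + z l * (z k * a ∗ b ∗ z m * c)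
      + z m * (z k * a ∗ z l * b ∗ c) + z (k + l) * (a ∗ b ∗ z m * c)
      + z (k + m) * (a ∗ z l * b ∗ c) + z (l + m) * (z k * a ∗ b ∗ c)
      + z (k + l + m) * (a ∗ b ∗ c) := by
  simp only [z_mul_hstar_z_mul, hstar_add_left, mul_add]
  abel

theorem z_mul_hstar_z_mul_hstar_z_mul_right (k l m : ℕ+) (a b c : Hone) :
    z k * a ∗ (z l * b ∗ z m * c)
      = z k * (a ∗ (z l * b ∗ z m * c)) + z l * (z k * a ∗ (b ∗ z m * c))
      + z m * (z k * a ∗ (z l * b ∗ c)) + z (k + l) * (a ∗ (b ∗ z m * c))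
      + z (k + m) * (a ∗ (z l * b ∗ c)) + z (l + m) * (z k * a ∗ (b ∗ c))
      + z (k + l + m) * (a ∗ (b ∗ c)) := by
  simp only [z_mul_hstar_z_mul, hstar_add_right, mul_add, ← add_assoc]
  abel

theorem word_hstar_word_hstar_word : ∀ K L M : List ℕ+,
    word K ∗ word L ∗ word M = word K ∗ (word L ∗ word M)
  | [], L, M => by rw [word_nil, one_hstar, one_hstar]
  | k :: K, [], M => by rw [word_nil, hstar_one, one_hstar]
  | k :: K, l :: L, [] => by rw [word_nil, hstar_one, hstar_one]
  | k :: K, l :: L, m :: M => by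
    rw [word_cons k K, word_cons l L, word_cons m M, z_mul_hstar_z_mul_hstar_z_mul_left,
      z_mul_hstar_z_mul_hstar_z_mul_right]
    simp only [← word_cons]
    rw [word_hstar_word_hstar_word K (l :: L) (m :: M),
      word_hstar_word_hstar_word (k :: K) L (m :: M), word_hstar_word_hstar_word (k :: K) (l :: L) M,
      word_hstar_word_hstar_word K L (m :: M), word_hstar_word_hstar_word K (l :: L) M,
      word_hstar_word_hstar_word (k :: K) L M, word_hstar_word_hstar_word K L M]
termination_by K L M => K.length + L.length + M.length

end Hone

open Hone

/-- The harmonic product is associative. -/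
theorem harmonic_assoc (a b c : Hone) : hstar (hstar a b) c = hstar a (hstar b c) := by
  induction a using induction_on_word with
  | add a a' ha ha' => simp only [hstar_add_left, ha, ha']
  | smul_word r K =>
  induction b using induction_on_word with
  | add b b' hb hb' => simp only [hstar_add_left, hstar_add_right, hb, hb']
  | smul_word s L =>
  induction c using induction_on_word with
  | add c c' hc hc' => simp only [hstar_add_right, hc, hc']
  | smul_word t M =>
  simp only [hstar_smul_left, hstar_smul_right, word_hstar_word_hstar_word]

end
end

section
/- The subspace 𝔥⁰ = ℚ + x·ℚ⟨x,y⟩·y is closed under the harmonic product ∗, i.e., it is a subalgebra of (𝔥¹, ∗). -/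
/- The harmonic product on 𝔥¹ = ℚ + ℚ⟨x,y⟩y, identified with the free
noncommutative algebra on the generators z_k (k ≥ 1), i.e. the monoid algebra
of the free monoid on ℕ+, is commutative. -/

noncomputable section

/-- A word lies in 𝔥⁰ iff it is empty or its first letter z_k has k ≥ 2
(i.e. the corresponding monomial x^{k-1}y⋯ begins with x). -/
def AdmissibleWord (K : List ℕ+) : Prop := ∀ k K', K = k :: K' → 2 ≤ (k : ℕ)

/-- 𝔥⁰ = ℚ + x𝔥y, the span of 1 and the admissible words. -/
def Hzero : Submodule ℚ Hone :=
  Submodule.span ℚ {a : Hone | ∃ K : List ℕ+, AdmissibleWord K ∧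
    a = MonoidAlgebra.single (FreeMonoid.ofList K) 1}

/-! Since `∗` is bilinear it suffices to multiply two admissible words. Each of the three terms in
the recursion for `z_k w₁ ∗ z_l w₂` starts with `z_k`, `z_l` or `z_{k+l}`, all of index at least 2,
and left multiplication by such a letter maps all of `𝔥¹` into `𝔥⁰`. -/

lemma Submodule.apply_mem_of_mem_span_of_mem_span {R M N P : Type*} [CommSemiring R]
    [AddCommMonoid M] [AddCommMonoid N] [AddCommMonoid P] [Module R M] [Module R N] [Module R P]
    {f : M →ₗ[R] N →ₗ[R] P} {s : Set M} {t : Set N} {p : Submodule R P}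
    (h : ∀ m ∈ s, ∀ n ∈ t, f m n ∈ p) {m : M} {n : N} (hm : m ∈ span R s) (hn : n ∈ span R t) :
    f m n ∈ p := by
  refine map₂_le.mp ?_ m hm n hn
  rw [map₂_span_span, span_le]
  exact Set.image2_subset_iff.mpr h

lemma hstar_add_left (a a' b : Hone) : hstar (a + a') b = hstar a b + hstar a' b := by
  rw [hstar, hstar, hstar, MonoidAlgebra.coeff_add, Finsupp.sum_add_index'] <;> intros <;>
    simp [add_mul, add_smul, Finsupp.sum_add]

lemma hstar_smul_left (c : ℚ) (a b : Hone) : hstar (c • a) b = c • hstar a b := by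
  rw [hstar, hstar, MonoidAlgebra.coeff_smul, Finsupp.sum_smul_index, Finsupp.smul_sum]
  · refine Finsupp.sum_congr fun w _ => ?_
    rw [Finsupp.smul_sum]
    refine Finsupp.sum_congr fun w' _ => ?_
    rw [mul_assoc, mul_smul]
  · intro w; simp

lemma hstar_add_right (a b b' : Hone) : hstar a (b + b') = hstar a b + hstar a b' := by
  rw [hstar, hstar, hstar, ← Finsupp.sum_add]
  refine Finsupp.sum_congr fun w c => ?_
  rw [MonoidAlgebra.coeff_add, Finsupp.sum_add_index'] <;> intros <;> simp [mul_add, add_smul]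

lemma hstar_smul_right (c : ℚ) (a b : Hone) : hstar a (c • b) = c • hstar a b := by
  rw [hstar, hstar, Finsupp.smul_sum]
  refine Finsupp.sum_congr fun w cw => ?_
  rw [MonoidAlgebra.coeff_smul, Finsupp.sum_smul_index, Finsupp.smul_sum]
  · refine Finsupp.sum_congr fun w' _ => ?_
    rw [smul_smul, mul_left_comm]
  · intro w'; simp

def hstarₗ : Hone →ₗ[ℚ] Hone →ₗ[ℚ] Hone :=
  LinearMap.mk₂ ℚ hstar hstar_add_left hstar_smul_left hstar_add_right hstar_smul_right

lemma hstar_single_single (K L : List ℕ+) :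
    hstar (MonoidAlgebra.single (FreeMonoid.ofList K) 1)
      (MonoidAlgebra.single (FreeMonoid.ofList L) 1) = hword K L := by
  simp [hstar, MonoidAlgebra.coeff_single, Finsupp.sum_single_index]

lemma single_mem_Hzero {K : List ℕ+} (hK : AdmissibleWord K) :
    MonoidAlgebra.single (FreeMonoid.ofList K) (1 : ℚ) ∈ Hzero :=
  Submodule.subset_span ⟨K, hK, rfl⟩

lemma single_of_mul_mem_Hzero {m : ℕ+} (hm : 2 ≤ (m : ℕ)) (a : Hone) :
    MonoidAlgebra.single (FreeMonoid.of m) (1 : ℚ) * a ∈ Hzero := by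
  induction a using MonoidAlgebra.induction with
  | zero => simpa only [mul_zero] using Hzero.zero_mem
  | single_add w c f _ _ ih =>
    rw [mul_add]
    refine Hzero.add_mem ?_ ih
    have hcons : MonoidAlgebra.single (FreeMonoid.of m) (1 : ℚ) * MonoidAlgebra.single w c
        = c • MonoidAlgebra.single (FreeMonoid.ofList (m :: FreeMonoid.toList w)) (1 : ℚ) := by
      rw [MonoidAlgebra.single_mul_single, one_mul, MonoidAlgebra.smul_single, smul_eq_mul, mul_one]
      rfl
    rw [hcons]
    exact Hzero.smul_mem c (single_mem_Hzero fun k K' hk => by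
      obtain ⟨rfl, -⟩ := List.cons.inj hk
      exact hm)

lemma hword_mem_Hzero : ∀ {K L : List ℕ+}, AdmissibleWord K → AdmissibleWord L →
    hword K L ∈ Hzero
  | [], L, _, hL => by rw [hword]; exact single_mem_Hzero hL
  | k :: K, [], hK, _ => by
    rw [hword]
    exacts [single_mem_Hzero hK, List.cons_ne_nil k K]
  | k :: K, l :: L, hK, hL => by
    have hk : 2 ≤ (k : ℕ) := hK k K rfl
    have hl : 2 ≤ (l : ℕ) := hL l L rfl
    have hkl : 2 ≤ ((k + l : ℕ+) : ℕ) := hk.trans (Nat.le_add_right _ _)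
    rw [hword]
    exact Hzero.add_mem (Hzero.add_mem (single_of_mul_mem_Hzero hk _)
      (single_of_mul_mem_Hzero hl _)) (single_of_mul_mem_Hzero hkl _)

/-- 𝔥⁰ is closed under the harmonic product, i.e. is a subalgebra of (𝔥¹, ∗). -/
theorem Hzero_closed_hstar (a b : Hone) (ha : a ∈ Hzero) (hb : b ∈ Hzero) :
    hstar a b ∈ Hzero := by
  refine Submodule.apply_mem_of_mem_span_of_mem_span (f := hstarₗ) ?_ ha hb
  rintro _ ⟨K, hK, rfl⟩ _ ⟨L, hL, rfl⟩
  simpa [hstarₗ, hstar_single_single] using hword_mem_Hzero hK hL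

end
end

section
/- The automorphism φ of ℚ⟨x,y⟩ with φ(x) = x+y and φ(y) = −y maps the subring 𝔥¹ = ℚ + ℚ⟨x,y⟩y into itself. -/
noncomputable section

/-- 𝔥 = ℚ⟨x,y⟩, the free noncommutative polynomial algebra on two generators. -/
abbrev H : Type := FreeAlgebra ℚ (Fin 2)

/-- The generator x. -/
def Xg : H := FreeAlgebra.ι ℚ (0 : Fin 2)

/-- The generator y. -/
def Yg : H := FreeAlgebra.ι ℚ (1 : Fin 2)

/-- z = x + y. -/
def Zg : H := Xg + Yg

/-- Membership in 𝔥¹ = ℚ + 𝔥y. -/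
def MemH1 (a : H) : Prop := ∃ (q : ℚ) (h : H), a = algebraMap ℚ H q + h * Yg

/-- The automorphism φ of ℚ⟨x,y⟩ with φ(x) = x + y and φ(y) = -y. -/
def phi : H →ₐ[ℚ] H := FreeAlgebra.lift ℚ (fun i : Fin 2 => if i = 0 then Xg + Yg else -Yg)

theorem phi_Yg : phi Yg = -Yg := by
  simp [phi, Yg]

/-- φ maps 𝔥¹ = ℚ + 𝔥y into itself. -/
theorem phi_maps_H1_to_H1 (a : H) (ha : MemH1 a) : MemH1 (phi a) := by
  obtain ⟨q, h, rfl⟩ := ha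
  refine ⟨q, -phi h, ?_⟩
  rw [map_add, AlgHom.commutes, map_mul, phi_Yg, neg_mul_comm]

end
end

section
/- In ℚ⟨x,y⟩ with z = x+y, for any word w and positive integers m₁,…,m_s, l, one has ∂_l(z^{m₁-1}y⋯z^{m_s-1}y·w) = −∑_{i=1}^{s} z^{m₁-1}y⋯z^{m_{i-1}-1}y·z^{m_i-1}x z^{l-1}y·z^{m_{i+1}-1}y⋯z^{m_s-1}y·w + z^{m₁-1}y⋯z^{m_s-1}y·∂_l(w). -/
noncomputable section

/-- The product z^{m₁-1}y ⋯ z^{m_s-1}y associated to a tuple (m₁,…,m_s) of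
positive integers. -/
def zy (ms : List ℕ+) : H := (ms.map fun m => Zg ^ ((m : ℕ) - 1) * Yg).prod

/-! Since ∂_l kills z, it acts on each factor z^{m-1}y only through y, turning it into
-z^{m-1}x z^{l-1}y; the theorem is the Leibniz rule for the product of these factors. -/

section Leibniz

variable {A : Type*} [Ring A] {D : A → A} (hD : ∀ a b, D (a * b) = D a * b + a * D b)
include hD

theorem leibniz_map_one : D 1 = 0 := by
  simpa using hD 1 1

theorem leibniz_map_pow_eq_zero {a : A} (ha : D a = 0) (k : ℕ) : D (a ^ k) = 0 := by
  induction k with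
  | zero => rw [pow_zero, leibniz_map_one hD]
  | succ k ih => rw [pow_succ, hD, ih, ha, zero_mul, mul_zero, add_zero]

theorem leibniz_map_list_prod {ι : Type*} (g : ι → A) (l : List ι) :
    D (l.map g).prod
      = ∑ i : Fin l.length,
          ((l.take i).map g).prod * D (g (l.get i)) * ((l.drop (i + 1)).map g).prod := by
  induction l with
  | nil => simpa using leibniz_map_one hD
  | cons a l ih =>
    rw [List.map_cons, List.prod_cons, hD, ih]
    simp [Fin.sum_univ_succ, Finset.mul_sum, mul_assoc]

end Leibniz

-- `zy` coerces `ms` to a `List ℕ` (through the list monad) before mapping.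
theorem zy_eq_prod_map (ms : List ℕ+) :
    zy ms = (ms.map fun m : ℕ+ => Zg ^ ((m : ℕ) - 1) * Yg).prod := by
  rw [zy, show (ms >>= fun m => pure (m : ℕ)) = ms.map (↑) from List.flatMap_pure_eq_map _ ms,
    List.map_map]
  rfl

/-- Leibniz formula for ∂_l applied to z^{m₁-1}y⋯z^{m_s-1}y·w. -/
theorem derivation_zy_mul (l : ℕ+) (D : H →ₗ[ℚ] H)
    (hD : ∀ a b : H, D (a * b) = D a * b + a * D b)
    (hx : D Xg = Xg * Zg ^ ((l : ℕ) - 1) * Yg)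
    (hy : D Yg = -(Xg * Zg ^ ((l : ℕ) - 1) * Yg))
    (ms : List ℕ+) (w : H) :
    D (zy ms * w)
      = -(∑ i : Fin ms.length,
            zy (ms.take (i : ℕ))
              * (Zg ^ ((ms.get i : ℕ) - 1) * Xg * Zg ^ ((l : ℕ) - 1) * Yg)
              * zy (ms.drop ((i : ℕ) + 1)) * w)
        + zy ms * D w := by
  have hz : D Zg = 0 := by rw [Zg, map_add, hx, hy, add_neg_cancel]
  have hfactor (m : ℕ) : D (Zg ^ m * Yg) = -(Zg ^ m * Xg * Zg ^ ((l : ℕ) - 1) * Yg) := by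
    rw [hD, leibniz_map_pow_eq_zero hD hz, hy]
    simp [mul_assoc]
  rw [hD, zy_eq_prod_map, leibniz_map_list_prod hD, Finset.sum_mul, ← Finset.sum_neg_distrib]
  simp only [hfactor, mul_neg, neg_mul, zy_eq_prod_map]

end
end

section
/- For any prime p and positive integers k₁,…,k_d, one has ζ_p(k₁,…,k_d) ≡ (−1)^{k₁+⋯+k_d} ζ_p(k_d,…,k₁) (mod p), where ζ_p(k₁,…,k_d) = ∑_{p>n₁>⋯>n_d≥1} n₁^{-k₁}⋯n_d^{-k_d} computed in ℤ/pℤ. -/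
/-- The truncated multiple zeta sum ∑_{N>n₁>⋯>n_d≥1} n₁^{-k₁}⋯n_d^{-k_d} in
ℤ/pℤ, defined by recursion on the index list (outer variable bounded by N). -/
def zetaTrunc (p : ℕ) : List ℕ → ℕ → ZMod p
  | [], _ => 1
  | k :: ks, N => ∑ n ∈ Finset.Ico 1 N, ((n : ZMod p)⁻¹) ^ k * zetaTrunc p ks n

/-! The substitution `nᵢ ↦ p - nᵢ` turns a chain `p > n₁ > ⋯ > n_d > 0` into the chain
`0 < p - n₁ < ⋯ < p - n_d < p`, i.e. a chain for the reversed index list, and in `ℤ/pℤ` each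
factor `(p - n)^{-k}` equals `(-1)^k n^{-k}`. To make this an induction on the index list, the
sum is taken over chains `N > n₁ > ⋯ > n_d > m` with both ends free: the reflection maps the
window `(m, N)` to `(p - N, p - m)`, and peeling off the innermost variable of the reversed
list matches peeling off the outermost one of the original. -/

open Finset

def zetaTruncIoo (p : ℕ) : List ℕ → ℕ → ℕ → ZMod p
  | [], _, _ => 1
  | k :: ks, m, N => ∑ n ∈ Ioo m N, ((n : ZMod p)⁻¹) ^ k * zetaTruncIoo p ks m n

theorem Finset.sum_Ioo_reflect {M : Type*} [AddCommMonoid M] (f : ℕ → M) {m N p : ℕ}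
    (hN : N ≤ p) : ∑ n ∈ Ioo m N, f (p - n) = ∑ n ∈ Ioo (p - N) (p - m), f n := by
  refine sum_nbij' (p - ·) (p - ·) ?_ ?_ ?_ ?_ fun _ _ => rfl <;>
    · intro n hn
      simp only [mem_Ioo] at hn ⊢
      omega

theorem zetaTruncIoo_zero_left (p : ℕ) (ks : List ℕ) (N : ℕ) :
    zetaTruncIoo p ks 0 N = zetaTrunc p ks N := by
  induction ks generalizing N with
  | nil => rfl
  | cons k ks ih => simp only [zetaTruncIoo, zetaTrunc, ih, ← Ico_add_one_left_eq_Ioo, zero_add]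

theorem zetaTruncIoo_append_singleton (p : ℕ) (ks : List ℕ) (k m N : ℕ) :
    zetaTruncIoo p (ks ++ [k]) m N
      = ∑ n ∈ Ioo m N, ((n : ZMod p)⁻¹) ^ k * zetaTruncIoo p ks n N := by
  induction ks generalizing N with
  | nil => simp [zetaTruncIoo]
  | cons k' ks ih =>
    have hswap : ∀ f : ℕ → ℕ → ZMod p, ∑ j ∈ Ioo m N, ∑ n ∈ Ioo m j, f n j
        = ∑ n ∈ Ioo m N, ∑ j ∈ Ioo n N, f n j := fun f =>
      sum_comm' fun j n => by simp only [mem_Ioo]; omega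
    simp only [List.cons_append, zetaTruncIoo, ih, mul_sum]
    rw [hswap]
    exact sum_congr rfl fun n _ => sum_congr rfl fun j _ => by ring

theorem inv_natCast_sub_pow {p : ℕ} [Fact p.Prime] {n : ℕ} (hn : n ≤ p) (k : ℕ) :
    ((n : ZMod p)⁻¹) ^ k = (-1) ^ k * (((p - n : ℕ) : ZMod p)⁻¹) ^ k := by
  rw [Nat.cast_sub hn, ZMod.natCast_self, zero_sub, inv_neg, neg_pow (n : ZMod p)⁻¹, ← mul_assoc,
    ← mul_pow, neg_one_mul, neg_neg, one_pow, one_mul]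

theorem zetaTruncIoo_reflect {p : ℕ} [Fact p.Prime] (ks : List ℕ) {m N : ℕ} (hN : N ≤ p) :
    zetaTruncIoo p ks m N = (-1) ^ ks.sum * zetaTruncIoo p ks.reverse (p - N) (p - m) := by
  induction ks generalizing m N with
  | nil => simp [zetaTruncIoo]
  | cons k ks ih =>
    rw [List.reverse_cons, zetaTruncIoo_append_singleton, zetaTruncIoo,
      ← sum_Ioo_reflect _ hN, mul_sum]
    refine sum_congr rfl fun n hn => ?_
    have hnp : n ≤ p := (mem_Ioo.mp hn).2.le.trans hN
    rw [ih hnp, inv_natCast_sub_pow hnp, List.sum_cons, pow_add]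
    ring

theorem zetaTrunc_reverse_general (p : ℕ) (hp : p.Prime) (ks : List ℕ) :
    zetaTrunc p ks p = (-1 : ZMod p) ^ ks.sum * zetaTrunc p ks.reverse p := by
  have := Fact.mk hp
  rw [← zetaTruncIoo_zero_left, zetaTruncIoo_reflect ks le_rfl, Nat.sub_self, Nat.sub_zero,
    zetaTruncIoo_zero_left]

/-- ζ_p(k₁,…,k_d) = (−1)^{k₁+⋯+k_d} ζ_p(k_d,…,k₁) in ℤ/pℤ. -/
theorem zetaTrunc_reverse (p : ℕ) (hp : p.Prime) (ks : List ℕ)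
    (hks : ∀ k ∈ ks, 1 ≤ k) :
    zetaTrunc p ks p = (-1 : ZMod p) ^ ks.sum * zetaTrunc p ks.reverse p :=
  zetaTrunc_reverse_general p hp ks
end
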